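/- arXiv:0911.2684 — 3 statements merged into one kernel-verified Lean document; each statement's English description precedes it below -/
import Mathlib

section
/- The map R(b,c): (u,v) ↦ (vF, u/F), F = ((a₁−b)+(a₀−c)uv)/((a₁−c)+(a₀−b)uv), satisfies the parametric Yang–Baxter equation R₁₂(b,c)R₁₃(b,d)R₂₃(c,d) = R₂₃(c,d)R₁₃(b,d)R₁₂(b,c) as an identity of rational maps on triples. -/
/-- The factor `F` of the map `R(b,c)`. -/
noncomputable def Fbc (a₀ a₁ b c u v : ℂ) : ℂ :=
  ((a₁ - b) + (a₀ - c) * u * v) / ((a₁ - c) + (a₀ - b) * u * v)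

/-- The Yang–Baxter map `R(b,c) : (u,v) ↦ (vF, u/F)`. -/
noncomputable def Rbc (a₀ a₁ b c : ℂ) : ℂ × ℂ → ℂ × ℂ :=
  fun w => (w.2 * Fbc a₀ a₁ b c w.1 w.2, w.1 / Fbc a₀ a₁ b c w.1 w.2)

noncomputable def Rbc₁₂ (a₀ a₁ b c : ℂ) : ℂ × ℂ × ℂ → ℂ × ℂ × ℂ :=
  fun t => ((Rbc a₀ a₁ b c (t.1, t.2.1)).1, (Rbc a₀ a₁ b c (t.1, t.2.1)).2, t.2.2)

noncomputable def Rbc₁₃ (a₀ a₁ b c : ℂ) : ℂ × ℂ × ℂ → ℂ × ℂ × ℂ :=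
  fun t => ((Rbc a₀ a₁ b c (t.1, t.2.2)).1, t.2.1, (Rbc a₀ a₁ b c (t.1, t.2.2)).2)

noncomputable def Rbc₂₃ (a₀ a₁ b c : ℂ) : ℂ × ℂ × ℂ → ℂ × ℂ × ℂ :=
  fun t => (t.1, (Rbc a₀ a₁ b c (t.2.1, t.2.2)).1, (Rbc a₀ a₁ b c (t.2.1, t.2.2)).2)

/-- `R(b,c)` is defined at `(u,v)`: all denominators are nonzero. -/
def RbcDefined (a₀ a₁ b c u v : ℂ) : Prop :=
  (a₁ - c) + (a₀ - b) * u * v ≠ 0 ∧ Fbc a₀ a₁ b c u v ≠ 0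
set_option maxHeartbeats 1000000 in
theorem Rbc_YangBaxter (a₀ a₁ b c d : ℂ) (t : ℂ × ℂ × ℂ)
    (h1 : RbcDefined a₀ a₁ c d t.2.1 t.2.2)
    (h2 : RbcDefined a₀ a₁ b d (Rbc₂₃ a₀ a₁ c d t).1 (Rbc₂₃ a₀ a₁ c d t).2.2)
    (h3 : RbcDefined a₀ a₁ b c (Rbc₁₃ a₀ a₁ b d (Rbc₂₃ a₀ a₁ c d t)).1
      (Rbc₁₃ a₀ a₁ b d (Rbc₂₃ a₀ a₁ c d t)).2.1)
    (h4 : RbcDefined a₀ a₁ b c t.1 t.2.1)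
    (h5 : RbcDefined a₀ a₁ b d (Rbc₁₂ a₀ a₁ b c t).1 (Rbc₁₂ a₀ a₁ b c t).2.2)
    (h6 : RbcDefined a₀ a₁ c d (Rbc₁₃ a₀ a₁ b d (Rbc₁₂ a₀ a₁ b c t)).2.1
      (Rbc₁₃ a₀ a₁ b d (Rbc₁₂ a₀ a₁ b c t)).2.2) :
    Rbc₁₂ a₀ a₁ b c (Rbc₁₃ a₀ a₁ b d (Rbc₂₃ a₀ a₁ c d t)) =
      Rbc₂₃ a₀ a₁ c d (Rbc₁₃ a₀ a₁ b d (Rbc₁₂ a₀ a₁ b c t)) := by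
  obtain ⟨u, v, w⟩ := t
  simp only [RbcDefined, Rbc₁₂, Rbc₁₃, Rbc₂₃, Rbc] at h1 h2 h3 h4 h5 h6 ⊢
  obtain ⟨N1, eN1⟩ : ∃ x : ℂ, x = a₁ - c + (a₀ - d) * v * w := ⟨_, rfl⟩
  obtain ⟨D1, eD1⟩ : ∃ x : ℂ, x = a₁ - d + (a₀ - c) * v * w := ⟨_, rfl⟩
  obtain ⟨N4, eN4⟩ : ∃ x : ℂ, x = a₁ - b + (a₀ - c) * u * v := ⟨_, rfl⟩
  obtain ⟨D4, eD4⟩ : ∃ x : ℂ, x = a₁ - c + (a₀ - b) * u * v := ⟨_, rfl⟩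
  obtain ⟨N2, eN2⟩ : ∃ x : ℂ, x = (a₁ - b) * N1 + (a₀ - d) * u * v * D1 := ⟨_, rfl⟩
  obtain ⟨D2, eD2⟩ : ∃ x : ℂ, x = (a₁ - d) * N1 + (a₀ - b) * u * v * D1 := ⟨_, rfl⟩
  obtain ⟨N3, eN3⟩ : ∃ x : ℂ, x = (a₁ - b) * D2 + (a₀ - c) * v * w * N2 := ⟨_, rfl⟩
  obtain ⟨D3, eD3⟩ : ∃ x : ℂ, x = (a₁ - c) * D2 + (a₀ - b) * v * w * N2 := ⟨_, rfl⟩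
  obtain ⟨N5, eN5⟩ : ∃ x : ℂ, x = (a₁ - b) * D4 + (a₀ - d) * v * w * N4 := ⟨_, rfl⟩
  obtain ⟨D5, eD5⟩ : ∃ x : ℂ, x = (a₁ - d) * D4 + (a₀ - b) * v * w * N4 := ⟨_, rfl⟩
  obtain ⟨N6, eN6⟩ : ∃ x : ℂ, x = (a₁ - c) * N5 + (a₀ - d) * u * v * D5 := ⟨_, rfl⟩
  obtain ⟨D6, eD6⟩ : ∃ x : ℂ, x = (a₁ - d) * N5 + (a₀ - c) * u * v * D5 := ⟨_, rfl⟩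
  have hD1 : D1 ≠ 0 := by rw [eD1]; exact h1.1
  have hN1 : N1 ≠ 0 := by
    have h := h1.2; rw [Fbc, div_ne_zero_iff] at h; rw [eN1]; exact h.1
  have hD4 : D4 ≠ 0 := by rw [eD4]; exact h4.1
  have hN4 : N4 ≠ 0 := by
    have h := h4.2; rw [Fbc, div_ne_zero_iff] at h; rw [eN4]; exact h.1
  have hF1 : Fbc a₀ a₁ c d v w = N1 / D1 := by rw [Fbc, eN1, eD1]
  have hF4 : Fbc a₀ a₁ b c u v = N4 / D4 := by rw [Fbc, eN4, eD4]
  have hD2 : D2 ≠ 0 := by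
    have e : (a₁ - d + (a₀ - b) * u * (v / (Fbc a₀ a₁ c d v w))) * N1 = D2 := by
      rw [hF1, eD2]; field_simp
    rw [← e]; exact mul_ne_zero h2.1 hN1
  have hN2 : N2 ≠ 0 := by
    have h := h2.2
    rw [hF1, Fbc, div_ne_zero_iff] at h
    have e : (a₁ - b + (a₀ - d) * u * (v / (N1 / D1))) * N1 = N2 := by
      rw [eN2]; field_simp
    rw [← e]; exact mul_ne_zero h.1 hN1
  have hF2 : Fbc a₀ a₁ b d u (v / (Fbc a₀ a₁ c d v w)) = N2 / D2 := by
    rw [hF1, Fbc]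
    rw [div_eq_div_iff (by rw [show a₁ - d + (a₀ - b) * u * (v / (N1 / D1)) = D2 / N1 by rw [eD2]; field_simp]; exact div_ne_zero hD2 hN1) hD2]
    rw [eN2, eD2]; field_simp
  have hD5 : D5 ≠ 0 := by
    have e : (a₁ - d + (a₀ - b) * (v * (Fbc a₀ a₁ b c u v)) * w) * D4 = D5 := by
      rw [hF4, eD5]; field_simp
    rw [← e]; exact mul_ne_zero h5.1 hD4
  have hN5 : N5 ≠ 0 := by
    have h := h5.2
    rw [hF4, Fbc, div_ne_zero_iff] at h
    have e : (a₁ - b + (a₀ - d) * (v * (N4 / D4)) * w) * D4 = N5 := by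
      rw [eN5]; field_simp
    rw [← e]; exact mul_ne_zero h.1 hD4
  have hF5 : Fbc a₀ a₁ b d (v * (Fbc a₀ a₁ b c u v)) w = N5 / D5 := by
    rw [hF4, Fbc]
    rw [div_eq_div_iff (by rw [show a₁ - d + (a₀ - b) * (v * (N4 / D4)) * w = D5 / D4 by rw [eD5]; field_simp]; exact div_ne_zero hD5 hD4) hD5]
    rw [eN5, eD5]; field_simp
  have hD3 : D3 ≠ 0 := by
    have e : (a₁ - c + (a₀ - b) * (v / (Fbc a₀ a₁ c d v w) * (Fbc a₀ a₁ b d u (v / (Fbc a₀ a₁ c d v w)))) * (w * (Fbc a₀ a₁ c d v w))) * D2 = D3 := by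
      rw [hF2, hF1, eD3]; field_simp
    rw [← e]; exact mul_ne_zero h3.1 hD2
  have hN3 : N3 ≠ 0 := by
    have h := h3.2
    rw [hF2, hF1, Fbc, div_ne_zero_iff] at h
    have e : (a₁ - b + (a₀ - c) * (v / (N1 / D1) * (N2 / D2)) * (w * (N1 / D1))) * D2 = N3 := by
      rw [eN3]; field_simp
    rw [← e]; exact mul_ne_zero h.1 hD2
  have hF3 : Fbc a₀ a₁ b c (v / (Fbc a₀ a₁ c d v w) * (Fbc a₀ a₁ b d u (v / (Fbc a₀ a₁ c d v w)))) (w * (Fbc a₀ a₁ c d v w)) = N3 / D3 := by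
    rw [hF2, hF1, Fbc]
    rw [div_eq_div_iff (by rw [show a₁ - c + (a₀ - b) * (v / (N1 / D1) * (N2 / D2)) * (w * (N1 / D1)) = D3 / D2 by rw [eD3]; field_simp]; exact div_ne_zero hD3 hD2) hD3]
    rw [eN3, eD3]; field_simp
  have hD6 : D6 ≠ 0 := by
    have e : (a₁ - d + (a₀ - c) * (u / (Fbc a₀ a₁ b c u v)) * (v * (Fbc a₀ a₁ b c u v) / (Fbc a₀ a₁ b d (v * (Fbc a₀ a₁ b c u v)) w))) * N5 = D6 := by
      rw [hF5, hF4, eD6]; field_simp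
    rw [← e]; exact mul_ne_zero h6.1 hN5
  have hN6 : N6 ≠ 0 := by
    have h := h6.2
    rw [hF5, hF4, Fbc, div_ne_zero_iff] at h
    have e : (a₁ - c + (a₀ - d) * (u / (N4 / D4)) * (v * (N4 / D4) / (N5 / D5))) * N5 = N6 := by
      rw [eN6]; field_simp
    rw [← e]; exact mul_ne_zero h.1 hN5
  have hF6 : Fbc a₀ a₁ c d (u / (Fbc a₀ a₁ b c u v)) (v * (Fbc a₀ a₁ b c u v) / (Fbc a₀ a₁ b d (v * (Fbc a₀ a₁ b c u v)) w)) = N6 / D6 := by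
    rw [hF5, hF4, Fbc]
    rw [div_eq_div_iff (by rw [show a₁ - d + (a₀ - c) * (u / (N4 / D4)) * (v * (N4 / D4) / (N5 / D5)) = D6 / N5 by rw [eD6]; field_simp]; exact div_ne_zero hD6 hN5) hD6]
    rw [eN6, eD6]; field_simp
  have key1 : N1 * N3 * D5 = N5 * (D1 * D3) := by
    rw [eN3, eD3, eN5, eD5, eN2, eD2, eN1, eD1, eN4, eD4]; ring
  have key2 : N2 * (D4 * D6) = N4 * N6 * D2 := by
    rw [eN6, eD6, eN5, eD5, eN2, eD2, eN1, eD1, eN4, eD4]; ring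
  refine Prod.ext ?_ (Prod.ext ?_ ?_)
  · show w * (Fbc a₀ a₁ c d v w) * (Fbc a₀ a₁ b c (v / (Fbc a₀ a₁ c d v w) * (Fbc a₀ a₁ b d u (v / (Fbc a₀ a₁ c d v w)))) (w * (Fbc a₀ a₁ c d v w))) = w * (Fbc a₀ a₁ b d (v * (Fbc a₀ a₁ b c u v)) w)
    rw [hF3, hF1, hF5]
    field_simp
    linear_combination w * key1
  · show v / (Fbc a₀ a₁ c d v w) * (Fbc a₀ a₁ b d u (v / (Fbc a₀ a₁ c d v w))) / (Fbc a₀ a₁ b c (v / (Fbc a₀ a₁ c d v w) * (Fbc a₀ a₁ b d u (v / (Fbc a₀ a₁ c d v w)))) (w * (Fbc a₀ a₁ c d v w))) = v * (Fbc a₀ a₁ b c u v) / (Fbc a₀ a₁ b d (v * (Fbc a₀ a₁ b c u v)) w) * (Fbc a₀ a₁ c d (u / (Fbc a₀ a₁ b c u v)) (v * (Fbc a₀ a₁ b c u v) / (Fbc a₀ a₁ b d (v * (Fbc a₀ a₁ b c u v)) w)))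
    rw [hF3, hF2, hF1, hF6, hF5, hF4]
    field_simp
    linear_combination v * D1 * D3 * N5 * key2 - v * N4 * N6 * D2 * key1
  · show u / (Fbc a₀ a₁ b d u (v / (Fbc a₀ a₁ c d v w))) = u / (Fbc a₀ a₁ b c u v) / (Fbc a₀ a₁ c d (u / (Fbc a₀ a₁ b c u v)) (v * (Fbc a₀ a₁ b c u v) / (Fbc a₀ a₁ b d (v * (Fbc a₀ a₁ b c u v)) w)))
    rw [hF2, hF6, hF4]
    field_simp
    linear_combination (-u) * key2
end

section
/- The N×N matrix M built from variables u_j, v̄_j (j ∈ ℤ/Nℤ) as follows has determinant zero: for rows 0 ≤ i ≤ N−3, M has entries M_{i,i} = −u_i v̄_i p_{i+1}, M_{i,i+1} = q_i, M_{i,i+2} = −p_i, zero elsewhere; row N−2 has M_{N−2,0} = −p_{N−2}V, M_{N−2,N−2} = −u_{N−2}v̄_{N−2}p_{N−1}, M_{N−2,N−1} = q_{N−2}; row N−1 has M_{N−1,0} = q_{N−1}V, M_{N−1,1} = −p_{N−1}V, M_{N−1,N−1} = −u_{N−1}v̄_{N−1}p_0; here p_j = u_j v̄_j − 1, q_j =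 p_j u_{j+1} + v̄_j p_{j+1} (indices mod N) and V = ∏_{k=0}^{N−1} v̄_k. -/
open Matrix Finset

/-- `p_j = u_j v̄_j − 1`, indices in `ℤ/Nℤ`. -/
def pBKP {N : ℕ} (u vb : ZMod N → ℂ) (j : ZMod N) : ℂ := u j * vb j - 1

/-- `q_j = p_j u_{j+1} + v̄_j p_{j+1}`, indices in `ℤ/Nℤ`. -/
def qBKP {N : ℕ} (u vb : ZMod N → ℂ) (j : ZMod N) : ℂ :=
  pBKP u vb j * u (j + 1) + vb j * pBKP u vb (j + 1)

/-- `V = ∏_{k=0}^{N−1} v̄_k`. -/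
def VBKP {N : ℕ} (vb : ZMod N → ℂ) : ℂ := ∏ k ∈ Finset.range N, vb (k : ZMod N)

/-- The matrix `M` of the linear system for the Yang–Baxter map of
the `N`-reduced discrete BKP equation. -/
noncomputable def MBKP (N : ℕ) (u vb : ZMod N → ℂ) : Matrix (Fin N) (Fin N) ℂ :=
  Matrix.of fun i j =>
    let i' : ZMod N := ((i : ℕ) : ZMod N)
    if (i : ℕ) ≤ N - 3 then
      (if (j : ℕ) = (i : ℕ) then -(u i' * vb i' * pBKP u vb (i' + 1))
       else if (j : ℕ) = (i : ℕ) + 1 then qBKP u vb i'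
       else if (j : ℕ) = (i : ℕ) + 2 then -pBKP u vb i'
       else 0)
    else if (i : ℕ) = N - 2 then
      (if (j : ℕ) = 0 then -pBKP u vb i' * VBKP vb
       else if (j : ℕ) = N - 2 then -(u i' * vb i' * pBKP u vb (i' + 1))
       else if (j : ℕ) = N - 1 then qBKP u vb i'
       else 0)
    else
      (if (j : ℕ) = 0 then qBKP u vb i' * VBKP vb
       else if (j : ℕ) = 1 then -pBKP u vb i' * VBKP vb
       else if (j : ℕ) = N - 1 then -(u i' * vb i' * pBKP u vb (i' + 1))
       else 0)

/-!
Write `N = n + 3` and read the rows of `M` cyclically (indices mod `N`): row `i` is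
`d_i e_i + w_i q_i e_{i+1} - w_i w_{i+1} p_i e_{i+2}`, where `d_i = -u_i v̄_i p_{i+1}` and
`w_i = V` for the last row, `w_i = 1` otherwise. The vector
`y_i = ∏_{k ≠ i, i+1} p_k · ∏_{k > i} v̄_k` satisfies the two-term recurrence
`R_i : w_i p_i y_i = v̄_{i+1} p_{i+2} y_{i+1}`, both sides sharing the product of the `p_k` with
`k ≠ i+1`. Since `q_{i+1} = p_{i+1} u_{i+2} + v̄_{i+1} p_{i+2}`, column `i+2` of `y M` is
`u_{i+2} R_{i+1} - w_{i+1} R_i`, so `y M = 0`. If no `p_k` and no `v̄_k` vanishes then `y ≠ 0`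
and `det M = 0`. In general, shift `v̄` by a constant `t`: all but countably many `t` avoid the
bad values, and `det M` is continuous in `t`.
-/

theorem Fin.natCast_val_add_one {N : ℕ} [NeZero N] (i : Fin N) :
    (((i + 1 : Fin N) : ℕ) : ZMod N) = ((i : ℕ) : ZMod N) + 1 := by
  rw [Fin.val_add, Fin.val_one', Nat.add_mod_mod, ZMod.natCast_mod, Nat.cast_add, Nat.cast_one]

section

variable {n : ℕ} (u vb : ZMod (n + 3) → ℂ)

def wBKP (i : Fin (n + 3)) : ℂ := if (i : ℕ) = n + 2 then VBKP vb else 1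

noncomputable def yBKP (i : Fin (n + 3)) : ℂ :=
  (∏ k ∈ (univ.erase i).erase (i + 1), pBKP u vb (k : ℕ)) *
    ∏ k ∈ Ico ((i : ℕ) + 1) (n + 3), vb k

theorem MBKP_apply (i j : Fin (n + 3)) :
    MBKP (n + 3) u vb i j =
      (if j = i then -(u (i : ℕ) * vb (i : ℕ) * pBKP u vb ((i : ℕ) + 1)) else 0) +
      (if j = i + 1 then wBKP vb i * qBKP u vb (i : ℕ) else 0) -
      (if j = i + 1 + 1 then wBKP vb i * wBKP vb (i + 1) * pBKP u vb (i : ℕ) else 0) := by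
  have hi := i.isLt
  have hj := j.isLt
  simp only [MBKP, wBKP, of_apply, Fin.ext_iff, Fin.val_add_one, Fin.val_last]
  split_ifs <;> first | (exfalso; omega) | ring

theorem wBKP_mul_prod_Ico (i : Fin (n + 3)) :
    wBKP vb i * ∏ k ∈ Ico ((i : ℕ) + 1) (n + 3), vb k =
      vb ((i + 1 : Fin (n + 3)) : ℕ) *
        ∏ k ∈ Ico (((i + 1 : Fin (n + 3)) : ℕ) + 1) (n + 3), vb k := by
  simp only [Fin.val_add_one, Fin.ext_iff, Fin.val_last, wBKP]
  split_ifs with hi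
  · rw [hi, Ico_self, prod_empty, mul_one, VBKP, range_eq_Ico,
      prod_eq_prod_Ico_succ_bot (by omega), Nat.cast_zero]
  · rw [one_mul, prod_eq_prod_Ico_succ_bot (by omega)]

theorem wBKP_mul_pBKP_mul_yBKP (i : Fin (n + 3)) :
    wBKP vb i * pBKP u vb (i : ℕ) * yBKP u vb i =
      vb ((i + 1 : Fin (n + 3)) : ℕ) * pBKP u vb ((i + 1 + 1 : Fin (n + 3)) : ℕ) *
        yBKP u vb (i + 1) := by
  have hp : pBKP u vb (i : ℕ) * ∏ k ∈ (univ.erase i).erase (i + 1), pBKP u vb (k : ℕ) =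
      pBKP u vb ((i + 1 + 1 : Fin (n + 3)) : ℕ) *
        ∏ k ∈ (univ.erase (i + 1)).erase (i + 1 + 1), pBKP u vb (k : ℕ) := by
    rw [erase_right_comm, mul_prod_erase _ (fun k : Fin (n + 3) => pBKP u vb (k : ℕ)),
      mul_prod_erase _ (fun k : Fin (n + 3) => pBKP u vb (k : ℕ))] <;> simp
  calc wBKP vb i * pBKP u vb (i : ℕ) * yBKP u vb i
      = (pBKP u vb (i : ℕ) * ∏ k ∈ (univ.erase i).erase (i + 1), pBKP u vb (k : ℕ)) *
          (wBKP vb i * ∏ k ∈ Ico ((i : ℕ) + 1) (n + 3), vb k) := by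
        rw [yBKP]; ring
    _ = _ := by rw [hp, wBKP_mul_prod_Ico, yBKP]; ring

theorem vecMul_yBKP_MBKP : yBKP u vb ᵥ* MBKP (n + 3) u vb = 0 := by
  funext j
  obtain ⟨a, rfl⟩ : ∃ a, j = a + 1 + 1 := ⟨j - 1 - 1, by simp⟩
  simp only [vecMul, dotProduct, MBKP_apply, mul_add, mul_sub, mul_ite, mul_zero, sum_add_distrib,
    sum_sub_distrib, add_left_inj, sum_ite_eq, mem_univ, if_true, Pi.zero_apply]
  have h0 := wBKP_mul_pBKP_mul_yBKP u vb a
  have h1 := wBKP_mul_pBKP_mul_yBKP u vb (a + 1)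
  simp only [Fin.natCast_val_add_one, qBKP] at *
  linear_combination u (((a : ℕ) : ZMod (n + 3)) + 1 + 1) * h1 - wBKP vb (a + 1) * h0

theorem yBKP_ne_zero (hp : ∀ k, pBKP u vb k ≠ 0) (hv : ∀ k, vb k ≠ 0) (i : Fin (n + 3)) :
    yBKP u vb i ≠ 0 :=
  mul_ne_zero (prod_ne_zero_iff.2 fun _ _ => hp _) (prod_ne_zero_iff.2 fun _ _ => hv _)

theorem det_MBKP_eq_zero_of_ne_zero (hp : ∀ k, pBKP u vb k ≠ 0) (hv : ∀ k, vb k ≠ 0) :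
    (MBKP (n + 3) u vb).det = 0 :=
  exists_vecMul_eq_zero_iff.1
    ⟨yBKP u vb, fun h => yBKP_ne_zero u vb hp hv 0 (congrFun h 0), vecMul_yBKP_MBKP u vb⟩

end

theorem continuous_det_MBKP_add_const (N : ℕ) (u vb : ZMod N → ℂ) :
    Continuous fun t : ℂ => (MBKP N u fun k => vb k + t).det := by
  refine Continuous.matrix_det (continuous_matrix fun i j => ?_)
  simp only [MBKP, of_apply, pBKP, qBKP, VBKP]
  split_ifs <;> fun_prop

theorem countable_setOf_exists_pBKP_eq_zero_or {N : ℕ} [NeZero N] (u vb : ZMod N → ℂ) :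
    {t : ℂ | ∃ k, pBKP u (fun k => vb k + t) k = 0 ∨ vb k + t = 0}.Countable := by
  simp only [Set.ofPred_exists, Set.ofPred_or]
  refine Set.countable_iUnion fun k => Set.Countable.union (Set.Subsingleton.countable ?_)
    (Set.Subsingleton.countable ?_)
  · intro t₁ h₁ t₂ h₂
    simp only [Set.mem_ofPred_eq, pBKP] at h₁ h₂
    have hu : u k ≠ 0 := by rintro hu; simp [hu] at h₁
    have h : u k * (t₁ - t₂) = 0 := by linear_combination h₁ - h₂
    exact sub_eq_zero.1 ((mul_eq_zero.1 h).resolve_left hu)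
  · intro t₁ h₁ t₂ h₂
    simp only [Set.mem_ofPred_eq] at h₁ h₂
    linear_combination h₁ - h₂

theorem det_MBKP_eq_zero (N : ℕ) (hN : 3 ≤ N) (u vb : ZMod N → ℂ) :
    (MBKP N u vb).det = 0 := by
  obtain ⟨n, rfl⟩ : ∃ n, N = n + 3 := ⟨N - 3, by omega⟩
  have hF : (fun t : ℂ => (MBKP (n + 3) u fun k => vb k + t).det) = 0 := by
    refine (continuous_det_MBKP_add_const _ u vb).ext_on
      ((countable_setOf_exists_pBKP_eq_zero_or u vb).dense_compl ℂ) continuous_const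
      fun t ht => ?_
    simp only [Set.mem_compl_iff, Set.mem_ofPred_eq, not_exists, not_or] at ht
    exact det_MBKP_eq_zero_of_ne_zero u _ (fun k => (ht k).1) fun k => (ht k).2
  simpa using congrFun hF 0
end

section
/- Under the genericity assumption that u_j v̄_j ≠ 1 for all j and g_j(u, v̄) ≠ 0 for all j (where g_j(u,v̄) = Σ_{k=0}^{N−1} ∏_{l=0}^{k−1} v̄_{j+l} · (u_{j+k}v̄_{j+k} − 1) · ∏_{l=k+1}^{N−1} u_{j+l}, indices mod N), the kernel of the matrix M (defined in the companion statement) is one-dimensional, and it is spanned by the vector ᵗ[g₀ : v̄₀g₁ : v̄₀v̄₁g₂ : ⋯ : (v̄₀⋯v̄_{N−2})g_{N−1}]. -/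
open Matrix Finset

/-- The partial sums `g_j^{(n)}(u,v̄) = Σ_{k=0}^{n} ∏_{l=0}^{k−1} v̄_{j+l} ·
(u_{j+k}v̄_{j+k} − 1) · ∏_{l=k+1}^{n} u_{j+l}`. -/
noncomputable def gPart {N : ℕ} (u vb : ZMod N → ℂ) (j : ZMod N) (n : ℕ) : ℂ :=
  ∑ k ∈ Finset.range (n + 1),
    (∏ l ∈ Finset.range k, vb (j + (l : ℕ))) *
      (u (j + (k : ℕ)) * vb (j + (k : ℕ)) - 1) *
      ∏ l ∈ Finset.Icc (k + 1) n, u (j + (l : ℕ))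

/-- `g_j(u,v̄) = g_j^{(N−1)}(u,v̄)`. -/
noncomputable def gBKP {N : ℕ} (u vb : ZMod N → ℂ) (j : ZMod N) : ℂ := gPart u vb j (N - 1)

/-- The vector `ᵗ[g₀ : v̄₀g₁ : v̄₀v̄₁g₂ : ⋯ : (v̄₀⋯v̄_{N−2})g_{N−1}]`. -/
noncomputable def xBKP (N : ℕ) (u vb : ZMod N → ℂ) : Fin N → ℂ :=
  fun j => (∏ k ∈ Finset.range (j : ℕ), vb (k : ZMod N)) * gBKP u vb ((j : ℕ) : ZMod N)

/-!
Write `p_j = u_j v̄_j - 1`, `W n = v̄₀ ⋯ v̄_{n-1}` and `U = ∏ u_k`. Peeling off the first and the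
last summand of `g_j` gives `v̄_j g_{j+1} - u_j g_j = p_j (V - U)`, so `X n = W n g_n` satisfies
`X (n+1) = u_n X n + c W n p_n` with `c = V - U`. Every sequence of this first-order form
annihilates all the row forms `-u_i v̄_i p_{i+1} Y_i + q_i Y_{i+1} - p_i Y_{i+2}`, and the rows of
`M` are exactly these forms evaluated on the extension `Y (n + N) = V Y n` of a vector (this is
where the factor `V` in the last two rows comes from). Hence `M x = 0`.

Conversely, since all `p_i ≠ 0`, a solution of the row recurrences is determined by its first two
entries. If `M z = 0` and `z₀ = 0`, compare `z` with the solution `G n = g₀^{(n-1)}` (`c = 1`),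
whose initial values are `0, p₀`: `p₀ z - z₁ G` vanishes up to index `N`, where it equals
`-z₁ g₀` since `z_N = V z₀ = 0`. So `z₁ = 0` and `z = 0`; applied to `g₀ y - y₀ x` this shows
that `x` spans the kernel.
-/

namespace BKP

section Products

variable {M : Type*} [CommMonoid M] {N : ℕ}

def prefixProd (f : ZMod N → M) (n : ℕ) : M := ∏ k ∈ range n, f k

lemma prod_range_natCast_eq_prod_univ [NeZero N] (f : ZMod N → M) :
    ∏ k ∈ range N, f k = ∏ x : ZMod N, f x :=
  prod_nbij' (fun k => (k : ZMod N)) ZMod.val (fun _ _ => mem_univ _)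
    (fun x _ => mem_range.mpr x.val_lt) (fun _ hk => ZMod.val_cast_of_lt (mem_range.mp hk))
    (fun x _ => ZMod.natCast_zmod_val x) (fun _ _ => rfl)

lemma prod_range_add_natCast [NeZero N] (f : ZMod N → M) (j : ZMod N) :
    ∏ l ∈ range N, f (j + l) = prefixProd f N := by
  rw [prefixProd, prod_range_natCast_eq_prod_univ fun x => f (j + x),
    prod_range_natCast_eq_prod_univ]
  exact Fintype.prod_equiv (Equiv.addLeft j) _ _ fun _ => rfl

lemma mul_prod_range_pred_add_one (hN : 1 ≤ N) (f : ZMod N → M) (j : ZMod N) :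
    f j * ∏ l ∈ range (N - 1), f (j + 1 + l) = prefixProd f N := by
  obtain ⟨m, rfl⟩ : ∃ m, N = m + 1 := ⟨N - 1, by omega⟩
  rw [← prod_range_add_natCast f j, prod_range_succ', Nat.add_sub_cancel]
  simp only [Nat.cast_succ, Nat.cast_zero, add_zero, add_right_comm j]
  ac_rfl

lemma prefixProd_add_self (f : ZMod N → M) (n : ℕ) :
    prefixProd f (n + N) = prefixProd f N * prefixProd f n := by
  simp only [prefixProd, add_comm n, prod_range_add, Nat.cast_add, ZMod.natCast_self, zero_add]

end Products

variable {N : ℕ} (u vb : ZMod N → ℂ)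

lemma gPart_zero (j : ZMod N) : gPart u vb j 0 = pBKP u vb j := by
  simp [gPart, pBKP]

lemma gPart_succ (j : ZMod N) (n : ℕ) :
    gPart u vb j (n + 1) = gPart u vb j n * u (j + (n + 1 : ℕ)) +
      (∏ l ∈ range (n + 1), vb (j + l)) * pBKP u vb (j + (n + 1 : ℕ)) := by
  rw [gPart, sum_range_succ, Icc_eq_empty (by omega), prod_empty, mul_one, gPart, sum_mul, pBKP]
  congr 1
  refine sum_congr rfl fun k hk => ?_
  rw [prod_Icc_succ_top (by have := mem_range.mp hk; omega)]
  ring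

lemma gPart_succ' (j : ZMod N) (n : ℕ) :
    gPart u vb j (n + 1) = pBKP u vb j * ∏ l ∈ range (n + 1), u (j + 1 + l) +
      vb j * gPart u vb (j + 1) n := by
  have shift : ∀ l : ℕ, j + ((l + 1 : ℕ) : ZMod N) = j + 1 + l := fun l => by push_cast; ring
  rw [gPart, sum_range_succ', gPart, mul_sum, add_comm]
  congr 1
  · rw [← map_add_right_Icc, prod_map, range_eq_Ico, ← Ico_add_one_right_eq_Icc]
    simp only [addRightEmbedding_apply, shift]
    simp [pBKP]
  · refine sum_congr rfl fun k _ => ?_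
    rw [prod_range_succ', ← map_add_right_Icc (k + 1) n 1, prod_map]
    simp only [addRightEmbedding_apply, shift, Nat.cast_zero, add_zero]
    ring

lemma vb_mul_gBKP_add_one_sub (hN : 2 ≤ N) (j : ZMod N) :
    vb j * gBKP u vb (j + 1) - u j * gBKP u vb j =
      pBKP u vb j * (VBKP vb - prefixProd u N) := by
  have hN' : N - 1 = N - 2 + 1 := by omega
  have hwrap : j + 1 + ((N - 2 + 1 : ℕ) : ZMod N) = j := by
    rw [← hN', Nat.cast_sub (by omega), ZMod.natCast_self]; ring
  have hg : gBKP u vb j = pBKP u vb j * ∏ l ∈ range (N - 1), u (j + 1 + l) +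
      vb j * gPart u vb (j + 1) (N - 2) := by
    rw [gBKP, hN', gPart_succ', ← hN']
  have hg' : gBKP u vb (j + 1) = gPart u vb (j + 1) (N - 2) * u j +
      (∏ l ∈ range (N - 1), vb (j + 1 + l)) * pBKP u vb j := by
    rw [gBKP, hN', gPart_succ, hwrap, ← hN']
  rw [hg, hg', VBKP, ← prefixProd, ← mul_prod_range_pred_add_one (by omega) u j,
    ← mul_prod_range_pred_add_one (by omega) vb j]
  ring

def rowForm (Y : ℕ → ℂ) (i : ℕ) : ℂ :=
  -(u i * vb i * pBKP u vb ((i : ZMod N) + 1)) * Y i + qBKP u vb i * Y (i + 1) -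
    pBKP u vb i * Y (i + 2)

lemma rowForm_eq_zero_of_succ (c : ℂ) (Y : ℕ → ℂ)
    (hY : ∀ n, Y (n + 1) = u n * Y n + c * (prefixProd vb n * pBKP u vb n)) (i : ℕ) :
    rowForm u vb Y i = 0 := by
  have h₁ := hY i
  have h₂ := hY (i + 1)
  rw [prefixProd, prod_range_succ, ← prefixProd] at h₂
  push_cast at h₂
  rw [rowForm, qBKP]
  linear_combination vb i * pBKP u vb ((i : ZMod N) + 1) * h₁ - pBKP u vb i * h₂

lemma sum_ite_val_eq_three {R : Type*} [Semiring R] {n a b c : ℕ} (ha : a < n) (hb : b < n)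
    (hc : c < n) (hab : a ≠ b) (hac : a ≠ c) (hbc : b ≠ c) (A B C : R) (y : Fin n → R) :
    ∑ j : Fin n, (if (j : ℕ) = a then A else if (j : ℕ) = b then B
      else if (j : ℕ) = c then C else 0) * y j =
      A * y ⟨a, ha⟩ + B * y ⟨b, hb⟩ + C * y ⟨c, hc⟩ := by
  have split : ∀ j : Fin n, (if (j : ℕ) = a then A else if (j : ℕ) = b then B
      else if (j : ℕ) = c then C else 0) * y j = (if j = ⟨a, ha⟩ then A * y j else 0) +
        (if j = ⟨b, hb⟩ then B * y j else 0) + (if j = ⟨c, hc⟩ then C * y j else 0) := by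
    intro j
    simp only [Fin.ext_iff]
    split_ifs <;> first | omega | simp
  simp only [split, sum_add_distrib, sum_ite_eq', mem_univ, if_true]

lemma mulVec_MBKP_apply (hN : 3 ≤ N) (y : Fin N → ℂ) (Y : ℕ → ℂ)
    (hY : ∀ k (hk : k < N), Y k = y ⟨k, hk⟩) (hY₀ : Y N = VBKP vb * Y 0)
    (hY₁ : Y (N + 1) = VBKP vb * Y 1) (i : Fin N) :
    (MBKP N u vb *ᵥ y) i = rowForm u vb Y i := by
  obtain ⟨i, hi⟩ := i
  simp only [mulVec, dotProduct, MBKP, of_apply, rowForm]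
  rcases (by omega : i ≤ N - 3 ∨ i = N - 2 ∨ i = N - 1) with h | rfl | rfl
  · simp only [h, if_true]
    rw [sum_ite_val_eq_three (by omega) (by omega) (by omega) (by omega) (by omega) (by omega),
      hY i (by omega), hY (i + 1) (by omega), hY (i + 2) (by omega)]
    ring
  · simp only [show ¬ N - 2 ≤ N - 3 by omega, if_false, if_true]
    rw [sum_ite_val_eq_three (by omega) (by omega) (by omega) (by omega) (by omega) (by omega),
      show N - 2 + 2 = N by omega, hY₀, show N - 2 + 1 = N - 1 by omega, hY 0 (by omega),
      hY (N - 2) (by omega), hY (N - 1) (by omega)]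
    ring
  · simp only [show ¬ N - 1 ≤ N - 3 by omega, show N - 1 ≠ N - 2 by omega, if_false]
    rw [sum_ite_val_eq_three (by omega) (by omega) (by omega) (by omega) (by omega) (by omega),
      show N - 1 + 2 = N + 1 by omega, hY₁, show N - 1 + 1 = N by omega, hY₀, hY 0 (by omega),
      hY 1 (by omega), hY (N - 1) (by omega)]
    ring

noncomputable def xSeq (n : ℕ) : ℂ := prefixProd vb n * gBKP u vb n

lemma xSeq_succ (hN : 2 ≤ N) (n : ℕ) :
    xSeq u vb (n + 1) =
      u n * xSeq u vb n + (VBKP vb - prefixProd u N) * (prefixProd vb n * pBKP u vb n) := by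
  have key := vb_mul_gBKP_add_one_sub u vb hN n
  rw [xSeq, xSeq, prefixProd, prod_range_succ, ← prefixProd, Nat.cast_succ]
  linear_combination prefixProd vb n * key

lemma xSeq_add_self (n : ℕ) : xSeq u vb (n + N) = VBKP vb * xSeq u vb n := by
  rw [xSeq, xSeq, prefixProd_add_self, Nat.cast_add, ZMod.natCast_self, add_zero, VBKP,
    ← prefixProd, mul_assoc]

lemma mulVec_xBKP (hN : 3 ≤ N) : MBKP N u vb *ᵥ xBKP N u vb = 0 := by
  funext i
  rw [mulVec_MBKP_apply u vb hN _ (xSeq u vb) (fun _ _ => rfl),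
    rowForm_eq_zero_of_succ u vb _ _ (xSeq_succ u vb (by omega)), Pi.zero_apply]
  · simpa using xSeq_add_self u vb 0
  · simpa [add_comm] using xSeq_add_self u vb 1

noncomputable def gPartSeq : ℕ → ℂ
  | 0 => 0
  | n + 1 => gPart u vb 0 n

lemma gPartSeq_succ (n : ℕ) :
    gPartSeq u vb (n + 1) = u n * gPartSeq u vb n + 1 * (prefixProd vb n * pBKP u vb n) := by
  cases n with
  | zero => simp [gPartSeq, gPart_zero, prefixProd]
  | succ n =>
    rw [gPartSeq, gPartSeq, gPart_succ]
    simp only [zero_add, prefixProd]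
    ring

lemma eq_zero_of_rowForm_eq_zero (hp : ∀ j, pBKP u vb j ≠ 0) (m : ℕ) (Y : ℕ → ℂ)
    (hY : ∀ i < m, rowForm u vb Y i = 0) (h₀ : Y 0 = 0) (h₁ : Y 1 = 0) :
    ∀ n ≤ m + 1, Y n = 0 := by
  suffices ∀ n ≤ m, Y n = 0 ∧ Y (n + 1) = 0 from fun n hn =>
    n.eq_zero_or_eq_succ_pred.elim (fun h => h ▸ h₀) fun h =>
      h ▸ (this (n - 1) (by omega)).2
  intro n hn
  induction n with
  | zero => exact ⟨h₀, h₁⟩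
  | succ n ih =>
    obtain ⟨hn₀, hn₁⟩ := ih (by omega)
    refine ⟨hn₁, ?_⟩
    have := hY n (by omega)
    rw [rowForm, hn₀, hn₁] at this
    simpa [hp] using this

def quasiPeriodicExt [NeZero N] (V : ℂ) (y : Fin N → ℂ) (n : ℕ) : ℂ :=
  V ^ (n / N) * y ⟨n % N, Nat.mod_lt n (NeZero.pos N)⟩

lemma quasiPeriodicExt_of_lt [NeZero N] (V : ℂ) (y : Fin N → ℂ) {k : ℕ} (hk : k < N) :
    quasiPeriodicExt V y k = y ⟨k, hk⟩ := by
  simp [quasiPeriodicExt, Nat.div_eq_of_lt hk, Nat.mod_eq_of_lt hk]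

lemma quasiPeriodicExt_add_self [NeZero N] (V : ℂ) (y : Fin N → ℂ) (n : ℕ) :
    quasiPeriodicExt V y (n + N) = V * quasiPeriodicExt V y n := by
  simp only [quasiPeriodicExt, Nat.add_div_right n (NeZero.pos N), Nat.add_mod_right, pow_succ]
  ring

lemma eq_zero_of_mulVec_MBKP_eq_zero (hN : 3 ≤ N) (hp : ∀ j, pBKP u vb j ≠ 0)
    (hg : gBKP u vb 0 ≠ 0) (z : Fin N → ℂ) (hz : MBKP N u vb *ᵥ z = 0)
    (hz₀ : z ⟨0, by omega⟩ = 0) : z = 0 := by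
  have : NeZero N := ⟨by omega⟩
  have hZ := fun k (hk : k < N) => quasiPeriodicExt_of_lt (VBKP vb) z hk
  have hZ_add := quasiPeriodicExt_add_self (VBKP vb) z
  set Z := quasiPeriodicExt (VBKP vb) z
  have hZ_N : Z N = VBKP vb * Z 0 := by simpa using hZ_add 0
  have hrow : ∀ i < N, rowForm u vb Z i = 0 := fun i hi => by
    have h := mulVec_MBKP_apply u vb hN z Z hZ hZ_N (by simpa [add_comm] using hZ_add 1) ⟨i, hi⟩
    rwa [hz, eq_comm] at h
  set W := fun n => pBKP u vb 0 * Z n - Z 1 * gPartSeq u vb n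
  have hW : ∀ n ≤ N - 1 + 1, W n = 0 := by
    refine eq_zero_of_rowForm_eq_zero u vb hp (N - 1) W (fun i hi => ?_) ?_ ?_
    · have hG := rowForm_eq_zero_of_succ u vb 1 _ (gPartSeq_succ u vb) i
      have hZi := hrow i (by omega)
      rw [rowForm] at hG hZi ⊢
      linear_combination pBKP u vb 0 * hZi - Z 1 * hG
    · simp only [W, gPartSeq, hZ 0 (by omega), hz₀, mul_zero, sub_zero]
    · simp [W, gPartSeq, gPart_zero, mul_comm]
  have hG_N : gPartSeq u vb N = gBKP u vb 0 := by
    obtain ⟨m, rfl⟩ : ∃ m, N = m + 1 := ⟨N - 1, by omega⟩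
    rfl
  have hZ₁ : Z 1 = 0 := by
    have h := hW N (by omega)
    simpa only [W, hZ_N, hZ 0 (by omega), hz₀, hG_N, mul_zero, zero_sub, neg_eq_zero, mul_eq_zero,
      hg, or_false] using h
  funext k
  have := hW k (by omega)
  simpa [W, hZ₁, hp, hZ k k.2] using this

end BKP

theorem kernel_MBKP (N : ℕ) (hN : 3 ≤ N) (u vb : ZMod N → ℂ)
    (hgen : ∀ j : ZMod N, u j * vb j ≠ 1)
    (hg : ∀ j : ZMod N, ∀ n ≤ N - 1, gPart u vb j n ≠ 0) :
    (MBKP N u vb).mulVec (xBKP N u vb) = 0 ∧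
      xBKP N u vb ≠ 0 ∧
      ∀ y : Fin N → ℂ, (MBKP N u vb).mulVec y = 0 →
        ∃ c : ℂ, y = c • xBKP N u vb := by
  have hp : ∀ j, pBKP u vb j ≠ 0 := fun j => sub_ne_zero.mpr (hgen j)
  have hg₀ : gBKP u vb 0 ≠ 0 := hg 0 (N - 1) le_rfl
  have hx₀ : xBKP N u vb ⟨0, by omega⟩ = gBKP u vb 0 := by simp [xBKP]
  have hx := BKP.mulVec_xBKP u vb hN
  refine ⟨hx, fun h => hg₀ (hx₀ ▸ congrFun h _), fun y hy => ?_⟩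
  refine ⟨y ⟨0, by omega⟩ / gBKP u vb 0, ?_⟩
  rw [← sub_eq_zero]
  refine BKP.eq_zero_of_mulVec_MBKP_eq_zero u vb hN hp hg₀ _ ?_ ?_
  · rw [mulVec_sub, mulVec_smul, hy, hx, smul_zero, sub_zero]
  · rw [Pi.sub_apply, Pi.smul_apply, hx₀, smul_eq_mul, div_mul_cancel₀ _ hg₀, sub_self]
end
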